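/- When τ + α − αβ = 2, the PER-prioritized loss (1/τ)|δ|^τ has expected gradient proportional to the uniform MSE gradient: ∑_i w(i)·p(i)·sign(δ(i))·|δ(i)|^{τ−1} = ηN · (1/N)∑_i δ(i), where η = (min_j |δ(j)|^{αβ})/(∑_j |δ(j)|^α) > 0. -/

import Mathlib

open Finset

/-!
With `S = ∑ⱼ |δ j|^α` and `m = minⱼ |δ j|^(αβ)`, the unnormalised weight of sample `j` is
`(S/N)^β / |δ j|^(αβ)`, so its maximum is `(S/N)^β / m` and `w i = m / |δ i|^(αβ)`.
Hence `w i * p i * sign(δ i) |δ i|^(τ-1) = (m/S) · sign(δ i) |δ i|^(α - αβ + τ - 1)`, and the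
exponent condition `τ + α - αβ = 2` makes the power of `|δ i|` exactly `1`: each term is `η δ i`.
-/

theorem Real.sign_mul_abs (r : ℝ) : Real.sign r * |r| = r := by
  rcases lt_trichotomy r 0 with h | rfl | h
  · rw [Real.sign_of_neg h, abs_of_neg h]; ring
  · simp
  · rw [Real.sign_of_pos h, abs_of_pos h, one_mul]

theorem Real.rpow_mul_rpow_eq_rpow_mul_rpow {x a b c d : ℝ} (hx : 0 < x) (h : a + b = c + d) :
    x ^ a * x ^ b = x ^ c * x ^ d := by
  rw [← Real.rpow_add hx, h, Real.rpow_add hx]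

theorem Finset.sup'_div_eq_div_inf' {ι : Type*} {s : Finset ι} (hs : s.Nonempty) {c : ℝ}
    (hc : 0 ≤ c) {f : ι → ℝ} (hf : ∀ i ∈ s, 0 < f i) :
    s.sup' hs (fun i => c / f i) = c / s.inf' hs f := by
  obtain ⟨i₀, hi₀, hmin⟩ := s.exists_mem_eq_inf' hs f
  refine le_antisymm (sup'_le _ _ fun i hi => ?_) ?_
  · exact div_le_div_of_nonneg_left hc (hmin ▸ hf i₀ hi₀) (s.inf'_le f hi)
  · rw [hmin]
    exact s.le_sup' (fun i => c / f i) hi₀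

theorem inv_mul_div_rpow {N S x α β : ℝ} (hN : 0 < N) (hS : 0 < S) (hx : 0 < x) :
    (1 / (N * (x ^ α / S))) ^ β = (S / N) ^ β / x ^ (α * β) := by
  have hxα : 0 < x ^ α := Real.rpow_pos_of_pos hx α
  rw [show 1 / (N * (x ^ α / S)) = (S / N) / x ^ α by field_simp,
    Real.div_rpow (by positivity) hxα.le, ← Real.rpow_mul hx.le]

theorem stmt11_general (N : ℕ) (hN : 0 < N) (δ : Fin N → ℝ) (hδ : ∀ i, δ i ≠ 0)
    (τ α β : ℝ)
    (he : τ + α - α * β = 2)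
    (p w : Fin N → ℝ)
    (hp : ∀ i, p i = |δ i| ^ α / ∑ j, |δ j| ^ α)
    (hw : ∀ i, w i = (1 / ((N : ℝ) * p i)) ^ β
        / (Finset.univ.sup' (Finset.univ_nonempty_iff.mpr (Fin.pos_iff_nonempty.mp hN))
            (fun j => (1 / ((N : ℝ) * p j)) ^ β)))
    (η : ℝ)
    (hη : η = (Finset.univ.inf' (Finset.univ_nonempty_iff.mpr (Fin.pos_iff_nonempty.mp hN))
        (fun j => |δ j| ^ (α * β))) / ∑ j, |δ j| ^ α) :
    0 < η ∧
    ∑ i, w i * p i * (Real.sign (δ i) * |δ i| ^ (τ - 1))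
      = η * (N : ℝ) * ((1 / (N : ℝ)) * ∑ i, δ i) := by
  have hne : (univ : Finset (Fin N)).Nonempty :=
    univ_nonempty_iff.mpr (Fin.pos_iff_nonempty.mp hN)
  have hNpos : (0 : ℝ) < N := Nat.cast_pos.mpr hN
  have hx : ∀ i, 0 < |δ i| := fun i => abs_pos.mpr (hδ i)
  set S := ∑ j, |δ j| ^ α
  have hS : 0 < S := sum_pos (fun j _ => Real.rpow_pos_of_pos (hx j) α) hne
  set m := univ.inf' hne (fun j => |δ j| ^ (α * β))
  have hm : 0 < m := (lt_inf'_iff hne).mpr fun j _ => Real.rpow_pos_of_pos (hx j) _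
  have hc : 0 < (S / N) ^ β := Real.rpow_pos_of_pos (by positivity) β
  have hmax : univ.sup' hne (fun j => (1 / ((N : ℝ) * p j)) ^ β) = (S / N) ^ β / m := by
    simp_rw [hp, inv_mul_div_rpow hNpos hS (hx _)]
    exact sup'_div_eq_div_inf' hne hc.le fun j _ => Real.rpow_pos_of_pos (hx j) _
  have hterm : ∀ i, w i * p i * (Real.sign (δ i) * |δ i| ^ (τ - 1)) = η * δ i := by
    intro i
    have hpow : |δ i| ^ α * |δ i| ^ (τ - 1) = |δ i| ^ (α * β) * |δ i| ^ (1 : ℝ) :=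
      Real.rpow_mul_rpow_eq_rpow_mul_rpow (hx i) (by linarith)
    rw [Real.rpow_one] at hpow
    have hxαβ : 0 < |δ i| ^ (α * β) := Real.rpow_pos_of_pos (hx i) _
    rw [hw i, hmax, hp i, inv_mul_div_rpow hNpos hS (hx i), hη]
    conv_rhs => rw [← Real.sign_mul_abs (δ i)]
    field_simp
    linear_combination Real.sign (δ i) * hpow
  rw [sum_congr rfl fun i _ => hterm i, ← mul_sum]
  refine ⟨by rw [hη]; positivity, ?_⟩
  field_simp

theorem stmt11 (N : ℕ) (hN : 0 < N) (δ : Fin N → ℝ) (hδ : ∀ i, δ i ≠ 0)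
    (τ α β : ℝ) (hτ : 0 < τ) (hα0 : 0 < α) (hα1 : α ≤ 1) (hβ0 : 0 ≤ β) (hβ1 : β ≤ 1)
    (he : τ + α - α * β = 2)
    (p w : Fin N → ℝ)
    (hp : ∀ i, p i = |δ i| ^ α / ∑ j, |δ j| ^ α)
    (hw : ∀ i, w i = (1 / ((N : ℝ) * p i)) ^ β
        / (Finset.univ.sup' (Finset.univ_nonempty_iff.mpr (Fin.pos_iff_nonempty.mp hN))
            (fun j => (1 / ((N : ℝ) * p j)) ^ β)))
    (η : ℝ)
    (hη : η = (Finset.univ.inf' (Finset.univ_nonempty_iff.mpr (Fin.pos_iff_nonempty.mp hN))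
        (fun j => |δ j| ^ (α * β))) / ∑ j, |δ j| ^ α) :
    0 < η ∧
    ∑ i, w i * p i * (Real.sign (δ i) * |δ i| ^ (τ - 1))
      = η * (N : ℝ) * ((1 / (N : ℝ)) * ∑ i, δ i) :=
  stmt11_general N hN δ hδ τ α β he p w hp hw η hη
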